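/- Let X be an a-normal space with denominator function ζ. Then there exist a set I and a map g : X → [0,1]^I ⊆ ℝ^I (product topology) that is injective, continuous, and closed (hence a homeomorphism onto its image, which is a closed subset of [0,1]^I), and such that den(g(x)) = ζ(x) for every x ∈ X. Consequently, (X,ζ) is isomorphic as an a-space to (K,den) for a closed subset K of [0,1]^I. -/

import Mathlib

open Classical in
/-- The denominator of a real number: the reduced denominator if rational, `0` if irrational. -/
noncomputable def den (r : ℝ) : ℕ :=
  if h : ∃ q : ℚ, (q : ℝ) = r then h.choose.den else 0

/-- The least common multiple of a set of naturals, computed in `ℕ` ordered by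
divisibility with `0` as top element. -/
noncomputable def setLcm (S : Set ℕ) : ℕ :=
  sInf {n | (∀ s ∈ S, s ∣ n) ∧ ∀ m : ℕ, (∀ s ∈ S, s ∣ m) → n ∣ m}

/-- The denominator of a point of `ℝ^I`. -/
noncomputable def denV {I : Type*} (x : I → ℝ) : ℕ :=
  setLcm (Set.range fun i => den (x i))

/-- An a-normal space structure on a topological space `X` with denominator function `ζ`. -/
def ANormal {X : Type*} [TopologicalSpace X] (ζ : X → ℕ) : Prop :=
  CompactSpace X ∧ T2Space X ∧
  (∀ n : ℕ, IsClosed {x : X | ζ x ∣ n}) ∧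
  ∀ x y : X, x ≠ y → ∃ U V : Set X, IsOpen U ∧ IsOpen V ∧ x ∈ U ∧ y ∈ V ∧
    Disjoint U V ∧ ∀ z ∈ (U ∪ V)ᶜ, ζ z = 0

/-!
Let `𝓘` be the set of continuous `f : X → [0,1]` with `den (f z) ∣ ζ z` for all `z`, and
`g z = (f z)_{f ∈ 𝓘}`. Everything rests on an a-Urysohn lemma: rational values `φ a` prescribed
at finitely many points with `den (φ a) ∣ ζ a` are taken by some `f ∈ 𝓘`. As in Urysohn's lemma,
`f z = inf {q | z ∈ U q}` for open sets `U q` (`q ∈ ℚ`) with `closure (U q) ⊆ U s` for `q < s`,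
built one rational at a time. Two more invariants put `f` into `𝓘`: the boundary of each `U q`
lies in `ζ⁻¹ 0`, and `U q ∩ {ζ ∣ n}` only depends on the cell `⌈q n⌉`, which forces
`f z ∈ ℤ / n` when `ζ z ∣ n`. A new `U m` must contain one closed set and have its closure avoid
another; only finitely many cells near `m` are involved, and a-normality thickens a closed set to
an open one whose new boundary lies in `ζ⁻¹ 0`. Separating points and realising every
denominator `k ∣ ζ z` make `g` injective with `denV (g z) = ζ z`; compactness makes it a closed
embedding.
-/

open Set

lemma den_ratCast (q : ℚ) : den (q : ℝ) = q.den := by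
  have h : ∃ q' : ℚ, (q' : ℝ) = q := ⟨q, rfl⟩
  rw [den, dif_pos h, Rat.cast_injective h.choose_spec]

lemma den_dvd_of_mul_eq_intCast {x : ℝ} {n : ℕ} {k : ℤ} (h : x * n = k) : den x ∣ n := by
  rcases n.eq_zero_or_pos with rfl | hn
  · exact dvd_zero _
  have hx : x = ((k / n : ℚ) : ℝ) := by
    push_cast
    rw [← h, mul_div_cancel_right₀ _ (by positivity)]
  rw [hx, den_ratCast, ← Int.natCast_dvd_natCast, ← Int.cast_natCast n, ← Rat.divInt_eq_div]
  exact Rat.den_dvd k n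

lemma setLcm_eq {S : Set ℕ} {n : ℕ} (h1 : ∀ s ∈ S, s ∣ n)
    (h2 : ∀ m : ℕ, (∀ s ∈ S, s ∣ m) → n ∣ m) : setLcm S = n := by
  have : {k | (∀ s ∈ S, s ∣ k) ∧ ∀ m : ℕ, (∀ s ∈ S, s ∣ m) → k ∣ m} = {n} := by
    ext k
    exact ⟨fun hk => Nat.dvd_antisymm (hk.2 n h1) (h2 k hk.1), fun hk => hk ▸ ⟨h1, h2⟩⟩
  rw [setLcm, this, csInf_singleton]

lemma setLcm_eq_of_forall_dvd {S : Set ℕ} {n : ℕ} (hS : ∀ s ∈ S, s ∣ n)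
    (hdvd : ∀ k, 0 < k → k ∣ n → k ∈ S) : setLcm S = n := by
  refine setLcm_eq hS fun m hm => ?_
  rcases n.eq_zero_or_pos with rfl | hn
  · have : m + 1 ∣ m := hm _ (hdvd _ m.succ_pos (dvd_zero _))
    rw [Nat.eq_zero_of_dvd_of_lt this m.lt_succ_self]
  · exact hm n (hdvd n hn dvd_rfl)

section Cells

variable {q s t : ℚ} {n : ℕ}

lemma ceil_mul_lt_ceil_mul {k : ℤ} (hq : q * n ≤ k) (hs : k < s * n) : ⌈q * n⌉ < ⌈s * n⌉ :=
  (Int.ceil_le.2 hq).trans_lt (Int.lt_ceil.2 hs)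

lemma ceil_mul_ne_of_le_of_lt (hn : 0 < n) (hden : t.den ∣ n) (hqt : q ≤ t) (hts : t < s) :
    ⌈q * n⌉ ≠ ⌈s * n⌉ := by
  obtain ⟨c, rfl⟩ := hden
  have ht : t * (t.den * c : ℕ) = (t.num * c : ℤ) := by
    push_cast
    rw [← mul_assoc, Rat.mul_den_eq_num]
  refine (ceil_mul_lt_ceil_mul (k := t.num * c) ?_ ?_).ne <;> rw [← ht]
  · exact mul_le_mul_of_nonneg_right hqt (Nat.cast_nonneg _)
  · exact mul_lt_mul_of_pos_right hts (by exact_mod_cast hn)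

lemma ceil_mul_eq_of_dvd {g : ℕ} (hn : 0 < n) (hgn : g ∣ n) (h : ⌈q * n⌉ = ⌈s * n⌉) :
    ⌈q * g⌉ = ⌈s * g⌉ := by
  wlog hqs : q ≤ s generalizing q s
  · exact (this h.symm (le_of_not_ge hqs)).symm
  refine (Int.ceil_le_ceil (mul_le_mul_of_nonneg_right hqs g.cast_nonneg)).antisymm ?_
  by_contra! hlt
  obtain ⟨c, rfl⟩ := hgn
  have hc : (0 : ℚ) < c := by exact_mod_cast Nat.pos_of_mul_pos_left hn
  have h1 : q * (g * c : ℕ) ≤ (⌈q * g⌉ * c : ℤ) := by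
    push_cast
    rw [← mul_assoc]
    exact mul_le_mul_of_nonneg_right (Int.le_ceil _) hc.le
  have h2 : ((⌈q * g⌉ * c : ℤ) : ℚ) < s * (g * c : ℕ) := by
    push_cast
    rw [← mul_assoc]
    exact mul_lt_mul_of_pos_right (Int.lt_ceil.1 hlt) hc
  exact (ceil_mul_lt_ceil_mul h1 h2).ne h

lemma finite_setOf_ceil_mul_eq (hqs : q ≠ s) : {n : ℕ | ⌈q * n⌉ = ⌈s * n⌉}.Finite := by
  refine (finite_Iic ⌈1 / |q - s|⌉₊).subset fun n (hn : ⌈q * n⌉ = ⌈s * n⌉) => ?_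
  have hgap : |q - s| * n < 1 := by
    have := Int.abs_sub_lt_one_of_floor_eq_floor (a := -(q * n)) (b := -(s * n))
      (by rw [Int.floor_neg, Int.floor_neg, hn])
    rwa [neg_sub_neg, abs_sub_comm, ← sub_mul, abs_mul, Nat.abs_cast] at this
  have hn' : (n : ℚ) ≤ 1 / |q - s| :=
    (le_div_iff₀ (abs_pos.2 (sub_ne_zero.2 hqs))).2 (by rw [mul_comm]; exact hgap.le)
  exact Nat.cast_le.1 (hn'.trans (Nat.le_ceil _))

end Cells

section FiniteExtension

variable {ι β : Type*} (R : ι → ι → β → β → Prop)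

def CompatibleOn (d : Finset ι) (U : ι → β) : Prop :=
  ∀ q ∈ d, ∀ s ∈ d, R q s (U q) (U s)

variable {R}

lemma CompatibleOn.insert_update [DecidableEq ι] {d : Finset ι} {U : ι → β} {m : ι} {b : β}
    (hU : CompatibleOn R d U) (hm : m ∉ d) (hmm : R m m b b) (hqm : ∀ q ∈ d, R q m (U q) b)
    (hmq : ∀ s ∈ d, R m s b (U s)) : CompatibleOn R (insert m d) (Function.update U m b) := by
  have hU' : ∀ q ∈ d, Function.update U m b q = U q := fun q hq =>
    Function.update_of_ne (ne_of_mem_of_not_mem hq hm) _ _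
  intro q hq s hs
  rcases Finset.mem_insert.1 hq with rfl | hqd <;> rcases Finset.mem_insert.1 hs with rfl | hsd
  · simpa using hmm
  · rw [Function.update_self, hU' s hsd]; exact hmq s hsd
  · rw [Function.update_self, hU' q hqd]; exact hqm q hqd
  · rw [hU' q hqd, hU' s hsd]; exact hU q hqd s hsd

theorem exists_forall_of_compatibleOn_extend [Countable ι] [Nonempty β] [DecidableEq ι]
    (hext : ∀ d U, CompatibleOn R d U → ∀ m ∉ d,
      ∃ b, CompatibleOn R (insert m d) (Function.update U m b)) :
    ∃ U : ι → β, ∀ q s, R q s (U q) (U s) := by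
  rcases isEmpty_or_nonempty ι with hι | hι
  · exact ⟨fun _ => Classical.arbitrary β, fun q => isEmptyElim q⟩
  obtain ⟨e, he⟩ := exists_surjective_nat ι
  let State := {p : Finset ι × (ι → β) // CompatibleOn R p.1 p.2}
  have step (p : State) (m : ι) : ∃ p' : State,
      p.1.1 ⊆ p'.1.1 ∧ (∀ q ∈ p.1.1, p'.1.2 q = p.1.2 q) ∧ m ∈ p'.1.1 := by
    obtain ⟨⟨d, U⟩, hU⟩ := p
    by_cases hm : m ∈ d
    · exact ⟨⟨(d, U), hU⟩, subset_rfl, fun _ _ => rfl, hm⟩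
    obtain ⟨b, hb⟩ := hext d U hU m hm
    exact ⟨⟨(insert m d, Function.update U m b), hb⟩, Finset.subset_insert _ _,
      fun q hq => Function.update_of_ne (ne_of_mem_of_not_mem hq hm) _ _,
      Finset.mem_insert_self _ _⟩
  choose next hsub hagree hmem using step
  let F : ℕ → State := fun N =>
    Nat.rec ⟨(∅, fun _ => Classical.arbitrary β), by simp [CompatibleOn]⟩
      (fun N p => next p (e N)) N
  have hmono {N M : ℕ} (h : N ≤ M) :
      ∀ q ∈ (F N).1.1, q ∈ (F M).1.1 ∧ (F M).1.2 q = (F N).1.2 q := by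
    induction h with
    | refl => exact fun q hq => ⟨hq, rfl⟩
    | step _ ih =>
      intro q hq
      obtain ⟨h1, h2⟩ := ih q hq
      exact ⟨hsub _ _ h1, (hagree _ _ q h1).trans h2⟩
  choose N hN using he
  have hdom (q : ι) : q ∈ (F (N q + 1)).1.1 := by
    have h : e (N q) ∈ (F (N q + 1)).1.1 := hmem _ _
    rwa [hN q] at h
  refine ⟨fun q => (F (N q + 1)).1.2 q, fun q s => ?_⟩
  obtain ⟨hq, hUq⟩ := hmono (le_max_left (N q + 1) (N s + 1)) q (hdom q)
  obtain ⟨hs, hUs⟩ := hmono (le_max_right (N q + 1) (N s + 1)) s (hdom s)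
  simpa only [hUq, hUs] using (F _).2 q hq s hs

end FiniteExtension

section Separation

variable {X : Type*} [TopologicalSpace X] {Z s t : Set X}

def SeparatedNhdsOff (Z s t : Set X) : Prop :=
  ∃ U V : Set X, IsOpen U ∧ IsOpen V ∧ s ⊆ U ∧ t ⊆ V ∧ Disjoint U V ∧ (U ∪ V)ᶜ ⊆ Z

namespace SeparatedNhdsOff

lemma symm (h : SeparatedNhdsOff Z s t) : SeparatedNhdsOff Z t s := by
  obtain ⟨U, V, hU, hV, hsU, htV, hUV, hZ⟩ := h
  exact ⟨V, U, hV, hU, htV, hsU, hUV.symm, union_comm U V ▸ hZ⟩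

lemma mono_left {s' : Set X} (h : SeparatedNhdsOff Z s t) (hs : s' ⊆ s) :
    SeparatedNhdsOff Z s' t := by
  obtain ⟨U, V, hU, hV, hsU, htV, hUV, hZ⟩ := h
  exact ⟨U, V, hU, hV, hs.trans hsU, htV, hUV, hZ⟩

lemma union_left {s' : Set X} (h : SeparatedNhdsOff Z s t) (h' : SeparatedNhdsOff Z s' t) :
    SeparatedNhdsOff Z (s ∪ s') t := by
  obtain ⟨U, V, hU, hV, hsU, htV, hUV, hZ⟩ := h
  obtain ⟨U', V', hU', hV', hsU', htV', hUV', hZ'⟩ := h'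
  refine ⟨U ∪ U', V ∩ V', hU.union hU', hV.inter hV', union_subset_union hsU hsU',
    subset_inter htV htV', disjoint_union_left.2 ⟨hUV.mono_right inter_subset_left,
      hUV'.mono_right inter_subset_right⟩, fun z hz => ?_⟩
  simp only [mem_compl_iff, mem_union, mem_inter_iff, not_or, not_and_or] at hz
  obtain ⟨⟨hzU, hzU'⟩, hzV | hzV'⟩ := hz
  · exact hZ (by simp [hzU, hzV])
  · exact hZ' (by simp [hzU', hzV'])

lemma of_isCompact_left (hs : IsCompact s) (h : ∀ x ∈ s, SeparatedNhdsOff Z {x} t) :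
    SeparatedNhdsOff Z s t := by
  refine hs.induction_on ⟨∅, univ, isOpen_empty, isOpen_univ, subset_rfl, subset_univ t,
    empty_disjoint _, by simp⟩ (fun _ _ hst h => h.mono_left hst)
    (fun _ _ => union_left) fun x hx => ?_
  obtain ⟨U, V, hU, hV, hxU, htV, hUV, hZ⟩ := h x hx
  exact ⟨U, mem_nhdsWithin_of_mem_nhds (hU.mem_nhds (singleton_subset_iff.1 hxU)),
    U, V, hU, hV, subset_rfl, htV, hUV, hZ⟩

lemma of_isCompact (hs : IsCompact s) (ht : IsCompact t)
    (h : ∀ x ∈ s, ∀ y ∈ t, SeparatedNhdsOff Z {x} {y}) : SeparatedNhdsOff Z s t :=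
  of_isCompact_left hs fun x hx => (of_isCompact_left ht fun y hy => (h x hx y hy).symm).symm

end SeparatedNhdsOff

end Separation

namespace ANormal

variable {X : Type*} [TopologicalSpace X] {ζ : X → ℕ}

lemma compactSpace (hX : ANormal ζ) : CompactSpace X := hX.1

lemma t2Space (hX : ANormal ζ) : T2Space X := hX.2.1

lemma isClosed_setOf_dvd (hX : ANormal ζ) (n : ℕ) : IsClosed {z | ζ z ∣ n} := hX.2.2.1 n

lemma separatedNhdsOff {C D : Set X} (hX : ANormal ζ) (hC : IsClosed C) (hD : IsClosed D)
    (hCD : Disjoint C D) : SeparatedNhdsOff {z | ζ z = 0} C D := by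
  have := hX.compactSpace
  refine .of_isCompact hC.isCompact hD.isCompact fun x hx y hy => ?_
  obtain ⟨U, V, hU, hV, hxU, hyV, hUV, hZ⟩ := hX.2.2.2 x y (hCD.ne_of_mem hx hy)
  exact ⟨U, V, hU, hV, singleton_subset_iff.2 hxU, singleton_subset_iff.2 hyV, hUV, hZ⟩

lemma exists_isOpen_closure_subset {C G : Set X} (hX : ANormal ζ) (hC : IsClosed C)
    (hG : IsOpen G) (hCG : C ⊆ G) :
    ∃ O, IsOpen O ∧ C ⊆ O ∧ closure O ⊆ G ∧ closure O \ O ⊆ {z | ζ z = 0} := by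
  obtain ⟨U, V, hU, hV, hCU, hGV, hUV, hZ⟩ :=
    hX.separatedNhdsOff hC hG.isClosed_compl (disjoint_compl_right_iff_subset.2 hCG)
  have hclU : closure U ⊆ Vᶜ := closure_minimal hUV.subset_compl_right hV.isClosed_compl
  refine ⟨U, hU, hCU, hclU.trans (compl_subset_comm.1 hGV), fun z ⟨hzU, hzU'⟩ => hZ ?_⟩
  exact fun hz => hz.elim hzU' (hclU hzU)

end ANormal

lemma isClosed_inter_of_closure_diff_subset {X : Type*} [TopologicalSpace X] {V F Z : Set X}
    (hF : IsClosed F) (hV : closure V \ V ⊆ Z) (hFZ : Disjoint F Z) : IsClosed (V ∩ F) := by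
  refine isClosed_of_closure_subset fun z hz => ?_
  have hzF : z ∈ F := hF.closure_subset (closure_mono inter_subset_right hz)
  by_contra hzV
  exact hFZ.ne_of_mem hzF (hV ⟨closure_mono inter_subset_left hz, fun h => hzV ⟨h, hzF⟩⟩) rfl

section SublevelFun

variable {X : Type*} [TopologicalSpace X]

structure IsUrysohnFamily (V : ℚ → Set X) : Prop where
  isOpen : ∀ q, IsOpen (V q)
  closure_subset : ∀ q s, q < s → closure (V q) ⊆ V s
  eq_empty : ∀ q < 0, V q = ∅
  eq_univ : ∀ q, 1 < q → V q = univ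

noncomputable def sublevelFun (V : ℚ → Set X) (z : X) : ℝ := sInf ((↑) '' {q : ℚ | z ∈ V q})

namespace IsUrysohnFamily

variable {V : ℚ → Set X} {z : X} {q : ℚ}

lemma nonneg_of_mem (hV : IsUrysohnFamily V) (hz : z ∈ V q) : 0 ≤ q :=
  not_lt.1 fun hq => by simp [hV.eq_empty q hq] at hz

lemma sublevelFun_le (hV : IsUrysohnFamily V) (hz : z ∈ V q) : sublevelFun V z ≤ q :=
  csInf_le ⟨0, by rintro _ ⟨s, hs, rfl⟩; exact_mod_cast hV.nonneg_of_mem hs⟩ ⟨q, hz, rfl⟩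

lemma le_sublevelFun (hV : IsUrysohnFamily V) (hz : z ∉ V q) : q ≤ sublevelFun V z := by
  refine le_csInf ⟨2, 2, by simp [hV.eq_univ 2 one_lt_two], rfl⟩ ?_
  rintro _ ⟨s, hs, rfl⟩
  by_contra! hsq
  exact hz (hV.closure_subset s q (by exact_mod_cast hsq) (subset_closure hs))

lemma mem_of_sublevelFun_lt (hV : IsUrysohnFamily V) (h : sublevelFun V z < q) : z ∈ V q :=
  by_contra fun hz => (hV.le_sublevelFun hz).not_gt h

lemma notMem_closure_of_lt_sublevelFun (hV : IsUrysohnFamily V) (h : q < sublevelFun V z) :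
    z ∉ closure (V q) := fun hz => by
  obtain ⟨r, hqr, hr⟩ := exists_rat_btwn h
  exact (hV.sublevelFun_le (hV.closure_subset q r (by exact_mod_cast hqr) hz)).not_gt hr

lemma sublevelFun_mem_Icc (hV : IsUrysohnFamily V) (z : X) : sublevelFun V z ∈ Icc 0 1 := by
  refine ⟨le_of_forall_rat_lt_imp_le fun q hq => ?_, le_of_forall_lt_rat_imp_le fun q hq => ?_⟩
  · refine hV.le_sublevelFun fun hz => ?_
    exact (hV.nonneg_of_mem hz).not_gt (by exact_mod_cast hq)
  · exact hV.sublevelFun_le (by simp [hV.eq_univ q (by exact_mod_cast hq)])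

lemma continuous_sublevelFun (hV : IsUrysohnFamily V) : Continuous (sublevelFun V) := by
  refine OrderTopology.continuous_iff.2 fun t => ⟨?_, ?_⟩
  · have : sublevelFun V ⁻¹' Ioi t = ⋃ q : ℚ, ⋃ (_ : t < q), (closure (V q))ᶜ := by
      ext z
      simp only [mem_preimage, mem_Ioi, mem_iUnion, mem_compl_iff, exists_prop]
      refine ⟨fun h => ?_, fun ⟨q, htq, hz⟩ => htq.trans_le (hV.le_sublevelFun
        fun h => hz (subset_closure h))⟩
      obtain ⟨q, htq, hq⟩ := exists_rat_btwn h
      exact ⟨q, htq, hV.notMem_closure_of_lt_sublevelFun hq⟩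
    rw [this]
    exact isOpen_iUnion fun q => isOpen_iUnion fun _ => isClosed_closure.isOpen_compl
  · have : sublevelFun V ⁻¹' Iio t = ⋃ q : ℚ, ⋃ (_ : (q : ℝ) < t), V q := by
      ext z
      simp only [mem_preimage, mem_Iio, mem_iUnion, exists_prop]
      refine ⟨fun h => ?_, fun ⟨q, hqt, hz⟩ => (hV.sublevelFun_le hz).trans_lt hqt⟩
      obtain ⟨q, hq, hqt⟩ := exists_rat_btwn h
      exact ⟨q, hqt, hV.mem_of_sublevelFun_lt hq⟩
    rw [this]
    exact isOpen_iUnion fun q => isOpen_iUnion fun _ => hV.isOpen q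

lemma sublevelFun_eq (hV : IsUrysohnFamily V) {t : ℝ} (hlt : ∀ q : ℚ, t < q → z ∈ V q)
    (hgt : ∀ q : ℚ, (q : ℝ) < t → z ∉ V q) : sublevelFun V z = t :=
  le_antisymm (le_of_forall_lt_rat_imp_le fun q hq => hV.sublevelFun_le (hlt q hq))
    (le_of_forall_rat_lt_imp_le fun q hq => hV.le_sublevelFun (hgt q hq))

lemma exists_sublevelFun_mul_eq (hV : IsUrysohnFamily V) {n : ℕ} (hn : 0 < n)
    (hcell : ∀ q s : ℚ, q ∈ Ioo 0 1 → s ∈ Ioo 0 1 → ⌈q * n⌉ = ⌈s * n⌉ → z ∈ V s → z ∈ V q) :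
    ∃ k : ℤ, sublevelFun V z * n = k := by
  set f := sublevelFun V z
  by_contra! hf
  obtain ⟨hf0, hf1⟩ := hV.sublevelFun_mem_Icc z
  have hn' : (0 : ℝ) < n := by exact_mod_cast hn
  set k := ⌊f * n⌋
  have hkf : (k : ℝ) < f * n := (Int.floor_le _).lt_of_ne (hf k).symm
  have hfk : f * n < k + 1 := Int.lt_floor_add_one _
  have hk0 : (0 : ℝ) ≤ k := by exact_mod_cast Int.floor_nonneg.2 (by positivity)
  have hkn : (k : ℝ) + 1 ≤ n := by
    have : k < (n : ℤ) := by exact_mod_cast hkf.trans_le (mul_le_of_le_one_left hn'.le hf1)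
    exact_mod_cast Int.add_one_le_of_lt this
  have hceil (r : ℚ) (h1 : (k : ℝ) < r * n) (h2 : (r : ℝ) * n < k + 1) : ⌈r * n⌉ = k + 1 := by
    rw [Int.ceil_eq_iff, Int.cast_add, Int.cast_one, add_sub_cancel_right]
    exact ⟨by exact_mod_cast h1, by exact_mod_cast h2.le⟩
  obtain ⟨u, hku, huf⟩ := exists_rat_btwn (show k / (n : ℝ) < f by rwa [div_lt_iff₀ hn'])
  obtain ⟨v, hfv, hvk⟩ := exists_rat_btwn (show f < (k + 1) / (n : ℝ) by rwa [lt_div_iff₀ hn'])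
  rw [div_lt_iff₀ hn'] at hku
  rw [lt_div_iff₀ hn'] at hvk
  have hu0 : (0 : ℝ) < u := pos_of_mul_pos_left (hk0.trans_lt hku) hn'.le
  have hv1 : (v : ℝ) < 1 := (mul_lt_iff_lt_one_left hn').1 (hvk.trans_le hkn)
  have hzu := hcell u v ⟨by exact_mod_cast hu0, by exact_mod_cast huf.trans_le hf1⟩
    ⟨by exact_mod_cast hf0.trans_lt hfv, by exact_mod_cast hv1⟩
    ((hceil u hku ((mul_lt_mul_of_pos_right huf hn').trans hfk)).trans
      (hceil v (hkf.trans (mul_lt_mul_of_pos_right hfv hn')) hvk).symm)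
    (hV.mem_of_sublevelFun_lt hfv)
  exact (hV.sublevelFun_le hzu).not_gt huf

end IsUrysohnFamily

end SublevelFun

section Clamp

variable {X : Type*}

def clampFamily (U : ℚ → Set X) (q : ℚ) : Set X :=
  if q < 0 then ∅ else if 1 < q then univ else U q

lemma clampFamily_of_mem_Icc {U : ℚ → Set X} {q : ℚ} (hq : q ∈ Icc 0 1) :
    clampFamily U q = U q := by
  simp [clampFamily, not_lt.2 hq.1, not_lt.2 hq.2]

lemma isUrysohnFamily_clampFamily [TopologicalSpace X] {U : ℚ → Set X} (hopen : ∀ q, IsOpen (U q))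
    (hmono : ∀ q s, q < s → closure (U q) ⊆ U s) : IsUrysohnFamily (clampFamily U) where
  isOpen q := by unfold clampFamily; split_ifs <;> simp [hopen]
  closure_subset q s hqs := by
    unfold clampFamily
    split_ifs <;> first | (exfalso; linarith) | exact hmono q s hqs | simp
  eq_empty q hq := if_pos hq
  eq_univ q hq := by simp [clampFamily, hq, (zero_lt_one.trans hq).not_gt]

end Clamp

section Constraints

variable {X : Type*} (ζ : X → ℕ) (A : Finset X) (φ : X → ℚ) (d : Finset ℚ)
  (U : ℚ → Set X) (m : ℚ)

def cellMates : Set (ℚ × ℕ) := {p | p.1 ∈ d ∧ 0 < p.2 ∧ ⌈p.1 * p.2⌉ = ⌈m * p.2⌉}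

/-- The closure of the set `U m` to be added to a family defined on `d` has to avoid this. -/
def excludedSet : Set X :=
  (⋃ s ∈ d, ⋃ (_ : m < s), (U s)ᶜ) ∪ (⋃ p ∈ cellMates d m, {z | ζ z ∣ p.2} \ U p.1) ∪
    ↑(A.filter (m ≤ φ ·))

variable {ζ A φ d U m}

lemma finite_cellMates (hm : m ∉ d) : (cellMates d m).Finite := by
  refine (d.finite_toSet.biUnion fun q hq =>
    (finite_singleton q).prod (finite_setOf_ceil_mul_eq (ne_of_mem_of_not_mem hq hm))).subset ?_
  rintro ⟨q, n⟩ ⟨hq, -, hqn⟩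
  exact mem_biUnion hq ⟨rfl, hqn⟩

lemma notMem_excludedSet {z : X} (h1 : ∀ s ∈ d, m < s → z ∈ U s)
    (h2 : ∀ p ∈ cellMates d m, ζ z ∣ p.2 → z ∈ U p.1) (h3 : z ∈ A → φ z < m) :
    z ∉ excludedSet ζ A φ d U m := by
  simp only [excludedSet, mem_union, mem_iUnion, mem_compl_iff, mem_sdiff,
    Finset.coe_filter]
  rintro ((⟨s, hs, hms, hz⟩ | ⟨p, hp, hzn, hz⟩) | ⟨hzA, hmz⟩)
  · exact hz (h1 s hs hms)
  · exact hz (h2 p hp hzn)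
  · exact (h3 hzA).not_ge hmz

end Constraints

section LevelFamily

variable {X : Type*} [TopologicalSpace X] (ζ : X → ℕ) (A : Finset X) (φ : X → ℚ)

/-- `V` and `W` can serve as the sets `{f < q}` and `{f < s}` for a continuous `f` with
`den (f z) ∣ ζ z` and `f = φ` on `A`. -/
structure LevelCompat (q s : ℚ) (V W : Set X) : Prop where
  isOpen : IsOpen V
  closure_diff_subset : closure V \ V ⊆ {z | ζ z = 0}
  mem_of_lt : ∀ a ∈ A, φ a < q → a ∈ V
  notMem_closure_of_le : ∀ a ∈ A, q ≤ φ a → a ∉ closure V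
  closure_subset : q < s → closure V ⊆ W
  inter_eq : ∀ n : ℕ, 0 < n → ⌈q * n⌉ = ⌈s * n⌉ → V ∩ {z | ζ z ∣ n} = W ∩ {z | ζ z ∣ n}

/-- The set `U m` to be added to a family defined on `d` has to contain this. -/
def requiredSet (d : Finset ℚ) (U : ℚ → Set X) (m : ℚ) : Set X :=
  (⋃ q ∈ d, ⋃ (_ : q < m), closure (U q)) ∪ (⋃ p ∈ cellMates d m, U p.1 ∩ {z | ζ z ∣ p.2}) ∪
    ↑(A.filter (φ · < m))

variable {ζ A φ} {d : Finset ℚ} {U : ℚ → Set X} {m : ℚ}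

lemma LevelCompat.mem_of_mem_closure {q s : ℚ} {V W : Set X} (h : LevelCompat ζ A φ q s V W)
    {z : X} {n : ℕ} (hn : 0 < n) (hz : z ∈ closure V) (hzn : ζ z ∣ n) : z ∈ V := by
  by_contra hzV
  have : ζ z = 0 := h.closure_diff_subset ⟨hz, hzV⟩
  exact hn.ne' (Nat.eq_zero_of_zero_dvd (this ▸ hzn))

lemma closure_inter_subset_of_ceil_le (hU : CompatibleOn (LevelCompat ζ A φ) d U) {q s : ℚ}
    (hq : q ∈ d) (hs : s ∈ d) {n : ℕ} (hn : 0 < n) (hqs : ⌈q * n⌉ ≤ ⌈s * n⌉) :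
    closure (U q) ∩ {z | ζ z ∣ n} ⊆ U s := by
  rintro z ⟨hz, hzn⟩
  have hzq : z ∈ U q := (hU q hq q hq).mem_of_mem_closure hn hz hzn
  rcases lt_trichotomy q s with hlt | rfl | hgt
  · exact (hU q hq s hs).closure_subset hlt hz
  · exact hzq
  · have hceil : ⌈q * n⌉ = ⌈s * n⌉ :=
      hqs.antisymm (Int.ceil_le_ceil (mul_le_mul_of_nonneg_right hgt.le n.cast_nonneg))
    exact (((hU q hq s hs).inter_eq n hn hceil).subset ⟨hzq, hzn⟩).1

lemma isClosed_requiredSet (hX : ANormal ζ) (hU : CompatibleOn (LevelCompat ζ A φ) d U)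
    (hm : m ∉ d) : IsClosed (requiredSet ζ A φ d U m) := by
  have := hX.t2Space
  refine (((d.finite_toSet.isClosed_biUnion fun q _ =>
    isClosed_iUnion_of_finite fun _ => isClosed_closure).union
    ((finite_cellMates hm).isClosed_biUnion fun p hp => ?_)).union (Finset.isClosed _))
  refine isClosed_inter_of_closure_diff_subset (hX.isClosed_setOf_dvd p.2)
    (hU p.1 hp.1 p.1 hp.1).closure_diff_subset (disjoint_left.2 fun z hz hz0 => ?_)
  exact hp.2.1.ne' (Nat.eq_zero_of_zero_dvd ((hz0 : ζ z = 0) ▸ hz))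

lemma isClosed_excludedSet (hX : ANormal ζ) (hU : CompatibleOn (LevelCompat ζ A φ) d U)
    (hm : m ∉ d) : IsClosed (excludedSet ζ A φ d U m) := by
  have := hX.t2Space
  exact ((d.finite_toSet.isClosed_biUnion fun s hs =>
    isClosed_iUnion_of_finite fun _ => (hU s hs s hs).isOpen.isClosed_compl).union
    ((finite_cellMates hm).isClosed_biUnion fun p hp =>
      (hX.isClosed_setOf_dvd p.2).sdiff (hU p.1 hp.1 p.1 hp.1).isOpen)).union (Finset.isClosed _)

lemma notMem_excludedSet_of_mem_closure (hU : CompatibleOn (LevelCompat ζ A φ) d U) {q : ℚ}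
    (hq : q ∈ d) (hqm : q < m) {z : X} (hz : z ∈ closure (U q)) : z ∉ excludedSet ζ A φ d U m := by
  refine notMem_excludedSet (fun s hs hms => (hU q hq s hs).closure_subset (hqm.trans hms) hz)
    (fun p hp hzn => ?_) fun hzA => ?_
  · refine closure_inter_subset_of_ceil_le hU hq hp.1 hp.2.1 ?_ ⟨hz, hzn⟩
    exact hp.2.2 ▸ Int.ceil_le_ceil (mul_le_mul_of_nonneg_right hqm.le (Nat.cast_nonneg _))
  · by_contra! hmz
    exact (hU q hq q hq).notMem_closure_of_le z hzA (hqm.le.trans hmz) hz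

lemma notMem_excludedSet_of_mem_inter (hU : CompatibleOn (LevelCompat ζ A φ) d U)
    (hφ : ∀ a ∈ A, (φ a).den ∣ ζ a) {p : ℚ × ℕ} (hp : p ∈ cellMates d m) {z : X}
    (hz : z ∈ U p.1) (hzn : ζ z ∣ p.2) : z ∉ excludedSet ζ A φ d U m := by
  obtain ⟨hq, hn, hqm⟩ := hp
  refine notMem_excludedSet (fun s hs hms => ?_) (fun p' hp' hzn' => ?_) fun hzA => ?_
  · refine closure_inter_subset_of_ceil_le hU hq hs hn ?_ ⟨subset_closure hz, hzn⟩
    exact hqm ▸ Int.ceil_le_ceil (mul_le_mul_of_nonneg_right hms.le (Nat.cast_nonneg _))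
  · -- both `p.1` and `p'.1` share the `1 / gcd`-cell of `m`
    have hg : 0 < Nat.gcd p.2 p'.2 := Nat.gcd_pos_of_pos_left _ hn
    refine closure_inter_subset_of_ceil_le hU hq hp'.1 hg (le_of_eq ?_)
      ⟨subset_closure hz, Nat.dvd_gcd hzn hzn'⟩
    exact (ceil_mul_eq_of_dvd hn (Nat.gcd_dvd_left _ _) hqm).trans
      (ceil_mul_eq_of_dvd hp'.2.1 (Nat.gcd_dvd_right _ _) hp'.2.2).symm
  · by_contra! hmz
    have hzq : φ z < p.1 := by
      by_contra! hqz
      exact (hU p.1 hq p.1 hq).notMem_closure_of_le z hzA hqz (subset_closure hz)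
    exact ceil_mul_ne_of_le_of_lt hn ((hφ z hzA).trans hzn) hmz hzq hqm.symm

lemma notMem_excludedSet_of_lt (hU : CompatibleOn (LevelCompat ζ A φ) d U)
    (hφ : ∀ a ∈ A, (φ a).den ∣ ζ a) {a : X} (ha : a ∈ A) (ham : φ a < m) :
    a ∉ excludedSet ζ A φ d U m := by
  refine notMem_excludedSet (fun s hs hms => (hU s hs s hs).mem_of_lt a ha (ham.trans hms))
    (fun p hp han => ?_) fun _ => ham
  by_contra haq
  have hqa : p.1 ≤ φ a := not_lt.1 fun h => haq ((hU p.1 hp.1 p.1 hp.1).mem_of_lt a ha h)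
  exact ceil_mul_ne_of_le_of_lt hp.2.1 ((hφ a ha).trans han) hqa ham hp.2.2

lemma disjoint_requiredSet_excludedSet (hU : CompatibleOn (LevelCompat ζ A φ) d U)
    (hφ : ∀ a ∈ A, (φ a).den ∣ ζ a) :
    Disjoint (requiredSet ζ A φ d U m) (excludedSet ζ A φ d U m) := by
  refine disjoint_left.2 fun z hz => ?_
  simp only [requiredSet, mem_union, mem_iUnion, mem_inter_iff,
    Finset.coe_filter] at hz
  rcases hz with (⟨q, hq, hqm, hz⟩ | ⟨p, hp, hz, hzn⟩) | ⟨hzA, hzm⟩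
  · exact notMem_excludedSet_of_mem_closure hU hq hqm hz
  · exact notMem_excludedSet_of_mem_inter hU hφ hp hz hzn
  · exact notMem_excludedSet_of_lt hU hφ hzA hzm

lemma compatibleOn_insert_update (hU : CompatibleOn (LevelCompat ζ A φ) d U) (hm : m ∉ d)
    {O : Set X} (hO : IsOpen O) (hObd : closure O \ O ⊆ {z | ζ z = 0})
    (hreq : requiredSet ζ A φ d U m ⊆ O) (hexc : closure O ⊆ (excludedSet ζ A φ d U m)ᶜ) :
    CompatibleOn (LevelCompat ζ A φ) (insert m d) (Function.update U m O) := by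
  have hmemO (a : X) (ha : a ∈ A) (ham : φ a < m) : a ∈ O :=
    hreq (Or.inr (by simp [ha, ham]))
  have hclO (a : X) (ha : a ∈ A) (hma : m ≤ φ a) (hcl : a ∈ closure O) : False :=
    hexc hcl (Or.inr (by simp [ha, hma]))
  have htrace (p : ℚ × ℕ) (hp : p ∈ cellMates d m) :
      U p.1 ∩ {z | ζ z ∣ p.2} = O ∩ {z | ζ z ∣ p.2} := by
    refine Set.Subset.antisymm (fun z hz => ⟨hreq (Or.inl (Or.inr (mem_biUnion hp hz))), hz.2⟩)
      fun z ⟨hzO, hzn⟩ => ⟨?_, hzn⟩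
    by_contra hz
    exact hexc (subset_closure hzO) (Or.inl (Or.inr (mem_biUnion hp ⟨hzn, hz⟩)))
  refine hU.insert_update hm ⟨hO, hObd, hmemO, hclO, fun h => (lt_irrefl m h).elim,
    fun _ _ _ => rfl⟩ (fun q hq => { hU q hq q hq with
      closure_subset := fun hqm => fun z hz =>
        hreq (Or.inl (Or.inl (mem_biUnion hq (mem_iUnion_of_mem hqm hz))))
      inter_eq := fun n hn h => htrace (q, n) ⟨hq, hn, h⟩ })
    fun s hs => ⟨hO, hObd, hmemO, hclO, fun hms z hz => ?_,
      fun n hn h => (htrace (s, n) ⟨hs, hn, h.symm⟩).symm⟩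
  by_contra hzs
  exact hexc hz (Or.inl (Or.inl (mem_biUnion hs (mem_iUnion_of_mem hms hzs))))

theorem exists_compatibleOn_insert_update (hX : ANormal ζ) (hφ : ∀ a ∈ A, (φ a).den ∣ ζ a)
    (hU : CompatibleOn (LevelCompat ζ A φ) d U) (hm : m ∉ d) :
    ∃ O, CompatibleOn (LevelCompat ζ A φ) (insert m d) (Function.update U m O) := by
  obtain ⟨O, hO, hreq, hexc, hObd⟩ := hX.exists_isOpen_closure_subset
    (isClosed_requiredSet hX hU hm) (isClosed_excludedSet hX hU hm).isOpen_compl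
    (disjoint_requiredSet_excludedSet hU hφ).subset_compl_right
  exact ⟨O, compatibleOn_insert_update hU hm hO hObd hreq hexc⟩

end LevelFamily

section DenUrysohn

variable {X : Type*} [TopologicalSpace X] {ζ : X → ℕ}

structure IsDenMap (ζ : X → ℕ) (f : X → ℝ) : Prop where
  continuous : Continuous f
  mem_Icc : ∀ z, f z ∈ Icc 0 1
  den_dvd : ∀ z, den (f z) ∣ ζ z

theorem ANormal.exists_isDenMap_eqOn (hX : ANormal ζ) (A : Finset X) (φ : X → ℚ)
    (hφ : ∀ a ∈ A, φ a ∈ Icc 0 1 ∧ (φ a).den ∣ ζ a) :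
    ∃ f : X → ℝ, IsDenMap ζ f ∧ ∀ a ∈ A, f a = φ a := by
  obtain ⟨U, hU⟩ := exists_forall_of_compatibleOn_extend (R := LevelCompat ζ A φ)
    fun d U hU m hm => exists_compatibleOn_insert_update hX (fun a ha => (hφ a ha).2) hU hm
  have hV := isUrysohnFamily_clampFamily (fun q => (hU q q).isOpen)
    fun q s => (hU q s).closure_subset
  refine ⟨sublevelFun (clampFamily U), ⟨hV.continuous_sublevelFun, hV.sublevelFun_mem_Icc,
    fun z => ?_⟩, fun a ha => hV.sublevelFun_eq (fun q hq => ?_) fun q hq => ?_⟩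
  · rcases (ζ z).eq_zero_or_pos with hz | hz
    · exact hz ▸ dvd_zero _
    obtain ⟨k, hk⟩ := hV.exists_sublevelFun_mul_eq hz fun q s hq hs hqs hzs => by
      rw [clampFamily_of_mem_Icc (Ioo_subset_Icc_self hs)] at hzs
      rw [clampFamily_of_mem_Icc (Ioo_subset_Icc_self hq)]
      exact (((hU q s).inter_eq _ hz hqs).symm.subset ⟨hzs, dvd_rfl⟩).1
    exact den_dvd_of_mul_eq_intCast hk
  · have hq0 : 0 ≤ q := (hφ a ha).1.1.trans (by exact_mod_cast hq.le)
    rcases le_or_gt q 1 with hq1 | hq1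
    · rw [clampFamily_of_mem_Icc ⟨hq0, hq1⟩]
      exact (hU q q).mem_of_lt a ha (by exact_mod_cast hq)
    · simp [clampFamily, hq1, not_lt.2 hq0]
  · have hq1 : q ≤ 1 := by
      have : (q : ℝ) ≤ 1 := hq.le.trans (by exact_mod_cast (hφ a ha).1.2)
      exact_mod_cast this
    rcases lt_or_ge q 0 with hq0 | hq0
    · simp [clampFamily, hq0]
    · rw [clampFamily_of_mem_Icc ⟨hq0, hq1⟩]
      exact fun h => (hU q q).notMem_closure_of_le a ha (by exact_mod_cast hq.le)
        (subset_closure h)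

lemma ANormal.exists_isDenMap_ne (hX : ANormal ζ) {x y : X} (hxy : x ≠ y) :
    ∃ f : X → ℝ, IsDenMap ζ f ∧ f x ≠ f y := by
  classical
  obtain ⟨f, hf, hfA⟩ := hX.exists_isDenMap_eqOn {x, y} (fun z => if z = x then 0 else 1)
    fun a _ => by split_ifs <;> simp
  refine ⟨f, hf, ?_⟩
  rw [hfA x (by simp), hfA y (by simp), if_pos rfl, if_neg hxy.symm]
  norm_num

lemma ANormal.exists_isDenMap_den_eq (hX : ANormal ζ) (x : X) {k : ℕ} (hk : 0 < k)
    (hkx : k ∣ ζ x) : ∃ f : X → ℝ, IsDenMap ζ f ∧ den (f x) = k := by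
  have hden : (k⁻¹ : ℚ).den = k := Rat.inv_natCast_den_of_pos hk
  obtain ⟨f, hf, hfA⟩ := hX.exists_isDenMap_eqOn {x} (fun _ => k⁻¹) fun a ha =>
    ⟨⟨by positivity, Nat.cast_inv_le_one k⟩, by rwa [Finset.mem_singleton.1 ha, hden]⟩
  exact ⟨f, hf, by rw [hfA x (Finset.mem_singleton_self x), den_ratCast, hden]⟩

end DenUrysohn

/-- Every a-normal space `(X, ζ)` embeds, for some set `I`, into the
cube `[0,1]^I ⊆ ℝ^I` via a map `g` that is injective, continuous, and closed (hence a
homeomorphism onto its closed image) and satisfies `den (g x) = ζ x`; consequently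
`(X, ζ)` is isomorphic as an a-space to `(K, den)` for a closed subset `K` of `[0,1]^I`. -/
theorem aNormal_embeds_in_cube
    {X : Type u} [TopologicalSpace X] (ζ : X → ℕ) (hX : ANormal ζ) :
    ∃ (I : Type u) (g : X → I → ℝ),
      (∀ x i, g x i ∈ Set.Icc (0 : ℝ) 1) ∧
      Function.Injective g ∧ Continuous g ∧ IsClosedMap g ∧
      (∀ x, denV (g x) = ζ x) ∧
      IsClosed (Set.range g) ∧
      ∃ e : X ≃ₜ Set.range g, ∀ x : X, ((e x : Set.range g) : I → ℝ) = g x := by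
  have := hX.compactSpace
  have := hX.t2Space
  let g : X → {f : X → ℝ // IsDenMap ζ f} → ℝ := fun z f => f.1 z
  have hg : Continuous g := continuous_pi fun f => f.2.continuous
  have hinj : Function.Injective g := fun x y hxy => by
    by_contra hne
    obtain ⟨f, hf, hfxy⟩ := hX.exists_isDenMap_ne hne
    exact hfxy (congrFun hxy ⟨f, hf⟩)
  have hden (z : X) : denV (g z) = ζ z := by
    refine setLcm_eq_of_forall_dvd (by rintro _ ⟨f, rfl⟩; exact f.2.den_dvd z) fun k hk hkz => ?_
    obtain ⟨f, hf, hfz⟩ := hX.exists_isDenMap_den_eq z hk hkz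
    exact ⟨⟨f, hf⟩, hfz⟩
  have hce := Topology.IsClosedEmbedding.of_continuous_injective_isClosedMap hg hinj hg.isClosedMap
  exact ⟨_, g, fun z f => f.2.mem_Icc z, hinj, hg, hg.isClosedMap, hden, hce.isClosed_range,
    hce.toIsEmbedding.toHomeomorph, fun _ => rfl⟩
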